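/- If B is a Binomial(m, p) random variable with p > 0, then E[ 1{B > 0} / B ] ≤ 2 / ((m+1)·p). -/
import Mathlib


/-- If `B ~ Binomial(m, p)` with `p ∈ (0,1]`, then `E[1{B > 0}/B] ≤ 2/((m+1)p)`.
The expectation is written out explicitly as the sum
`Σ_{k=1}^m C(m,k) p^k (1−p)^{m−k} / k`. -/
theorem binomial_reciprocal_expectation_bound
    (m : ℕ) (p : ℝ) (hp : 0 < p) (hp1 : p ≤ 1) :
    ∑ k ∈ Finset.Icc 1 m,
        (m.choose k : ℝ) * p ^ k * (1 - p) ^ (m - k) / k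
      ≤ 2 / ((m + 1) * p) := by
  set q : ℝ := 1 - p with hq
  have hq0 : 0 ≤ q := by simp [hq]; linarith
  have hmp : (0:ℝ) < (m + 1) * p := by positivity
  -- the binomial(m+1) probabilities
  set f : ℕ → ℝ := fun j => ((m+1).choose j : ℝ) * p ^ j * q ^ (m + 1 - j) with hf
  have hfnn : ∀ j, 0 ≤ f j := fun j => by positivity
  have hsum1 : ∑ j ∈ Finset.range (m+2), f j = 1 := by
    have h := add_pow p q (m+1)
    have hpq : p + q = 1 := by ring
    rw [hpq, one_pow] at h
    rw [show m + 2 = (m+1) + 1 from rfl, h]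
    apply Finset.sum_congr rfl
    intro j hj
    simp only [hf]; ring
  -- termwise bound
  have key : ∀ k ∈ Finset.Icc 1 m,
      (m.choose k : ℝ) * p ^ k * q ^ (m - k) / k ≤ (2 / ((m + 1) * p)) * f (k+1) := by
    intro k hk
    obtain ⟨hk1, hkm⟩ := Finset.mem_Icc.mp hk
    have hk0 : (0:ℝ) < k := by exact_mod_cast hk1
    have hid : ((m+1 : ℕ) : ℝ) * (m.choose k : ℝ) = ((k:ℝ)+1) * ((m+1).choose (k+1) : ℝ) := by
      have h1 : ((m+1) * m.choose k : ℕ) = ((m+1).choose (k+1) * (k+1) : ℕ) :=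
        Nat.add_one_mul_choose_eq m k
      have h2 := congrArg (Nat.cast : ℕ → ℝ) h1
      push_cast at h2 ⊢
      linarith
    have hmk : m + 1 - (k+1) = m - k := by omega
    rw [hf]
    simp only
    rw [hmk, div_le_iff₀ hk0, div_mul_eq_mul_div, div_mul_eq_mul_div, le_div_iff₀ hmp]
    have hk1r : (1:ℝ) ≤ (k:ℝ) := by exact_mod_cast hk1
    have h2 : ((k:ℝ)+1) ≤ 2 * k := by linarith
    have hch : (0:ℝ) ≤ ((m+1).choose (k+1) : ℝ) := by positivity
    have hpk : (0:ℝ) ≤ p ^ k * q ^ (m-k) * p := by positivity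
    calc (m.choose k : ℝ) * p ^ k * q ^ (m - k) * ((↑m + 1) * p)
        = (((m+1:ℕ):ℝ) * (m.choose k : ℝ)) * (p ^ k * q ^ (m-k) * p) := by push_cast; ring
      _ = (((k:ℝ)+1) * ((m+1).choose (k+1) : ℝ)) * (p ^ k * q ^ (m-k) * p) := by rw [hid]
      _ ≤ (2 * (k:ℝ) * ((m+1).choose (k+1) : ℝ)) * (p ^ k * q ^ (m-k) * p) :=
          mul_le_mul_of_nonneg_right (mul_le_mul_of_nonneg_right h2 hch) hpk
      _ = 2 * (((m+1).choose (k+1) : ℝ) * p ^ (k+1) * q ^ (m - k)) * (k:ℝ) := by ring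
  calc ∑ k ∈ Finset.Icc 1 m, (m.choose k : ℝ) * p ^ k * q ^ (m - k) / k
      ≤ ∑ k ∈ Finset.Icc 1 m, (2 / ((m + 1) * p)) * f (k+1) := Finset.sum_le_sum key
    _ = (2 / ((m + 1) * p)) * ∑ k ∈ Finset.Icc 1 m, f (k+1) := by rw [Finset.mul_sum]
    _ ≤ (2 / ((m + 1) * p)) * 1 := by
        apply mul_le_mul_of_nonneg_left _ (by positivity)
        have : ∑ k ∈ Finset.Icc 1 m, f (k+1) = ∑ j ∈ Finset.Icc 2 (m+1), f j := by
          rw [show Finset.Icc 2 (m+1) = Finset.map (addRightEmbedding 1) (Finset.Icc 1 m) by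
            rw [Finset.map_add_right_Icc], Finset.sum_map]
          rfl
        rw [this, ← hsum1]
        apply Finset.sum_le_sum_of_subset_of_nonneg
        · intro j hj
          simp only [Finset.mem_Icc] at hj
          simp only [Finset.mem_range]; omega
        · intro j _ _; exact hfnn j
    _ = 2 / ((m + 1) * p) := mul_one _
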